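/- Let A be a finite commutative BCK-algebra whose order is a rooted tree with single atom (each interval [0,a] is a chain), with height n, and let k be a divisor of n with 1 < k < n. Define h(a) = |[0,a]| − 1, A_k = {a ∈ A : k divides h(a)}, m(A) the set of maximal elements, and b(A) the set of branching elements (b ∈ b(A) iff there exist c, d > b with c ∧ d = b). Then A_k ∪ m(A) is closed under ⊖ (is a subalgebra universe) if and only if b(A) ⊆ A_k and m(A) ⊆ A_k. -/
import Mathlib


structure CBCK (α : Type*) where
  sub : α → α → α
  zero : α
  sub_zero : ∀ x, sub x zero = x
  zero_sub : ∀ x, sub zero x = zero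
  comm : ∀ x y, sub x (sub x y) = sub y (sub y x)
  exch : ∀ x y z, sub (sub x y) z = sub (sub x z) y

namespace CBCK

variable {α : Type*}

/-- The induced order: `x ≤ y` iff `x ⊖ y = 0`. -/
def le (A : CBCK α) (x y : α) : Prop := A.sub x y = A.zero

def lt (A : CBCK α) (x y : α) : Prop := A.le x y ∧ x ≠ y

/-- The meet `x ∧ y = x ⊖ (x ⊖ y)`. -/
def meet (A : CBCK α) (x y : α) : α := A.sub x (A.sub x y)

/-- An atom: a minimal nonzero element. -/
def atom (A : CBCK α) (e : α) : Prop := e ≠ A.zero ∧ ∀ x, A.lt x e → x = A.zero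

/-- A maximal element. -/
def maximal (A : CBCK α) (m : α) : Prop := ∀ x, A.le m x → x = m

/-- A branching element: `b` with `c, d > b` and `c ∧ d = b`. -/
def branching (A : CBCK α) (b : α) : Prop :=
  ∃ c d, A.lt b c ∧ A.lt b d ∧ A.meet c d = b

/-- The rooted-tree condition: every interval `[0, a]` is a chain. -/
def chainIntervals (A : CBCK α) : Prop :=
  ∀ a x y, A.le x a → A.le y a → A.le x y ∨ A.le y x

/-- The height of an element: `h(a) = |[0,a]| - 1`. -/
noncomputable def height (A : CBCK α) (a : α) : ℕ :=
  ({x | A.le x a} : Set α).ncard - 1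

/-- Iterated subtraction: `x ⊖ 0·y = x`, `x ⊖ (k+1)·y = (x ⊖ k·y) ⊖ y`. -/
def isub (A : CBCK α) (x : α) : ℕ → α → α
  | 0, _ => x
  | k + 1, y => A.sub (A.isub x k y) y

/-- A subalgebra universe: contains `0` and is closed under `⊖`. -/
def IsSub (A : CBCK α) (B : Set α) : Prop :=
  A.zero ∈ B ∧ ∀ x ∈ B, ∀ y ∈ B, A.sub x y ∈ B

/-- The subalgebra generated by `S`: the least `⊖`-closed subset containing `S ∪ {0}`. -/
def gen (A : CBCK α) (S : Set α) : Set α :=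
  ⋂₀ {B : Set α | A.IsSub B ∧ S ⊆ B}

end CBCK

namespace CBCK

variable {α : Type*} (A : CBCK α)

lemma sub_self' (x : α) : A.sub x x = A.zero := by
  have h := A.comm x A.zero
  rw [A.sub_zero, A.zero_sub] at h
  exact h

lemma le_refl' (x : α) : A.le x x := A.sub_self' x

lemma zero_le' (x : α) : A.le A.zero x := A.zero_sub x

lemma le_zero_iff' {x : α} : A.le x A.zero ↔ x = A.zero := by
  unfold le; rw [A.sub_zero]

lemma meet_comm' (x y : α) : A.meet x y = A.meet y x := A.comm x y

lemma meet_eq_of_le {x y : α} (h : A.le x y) : A.meet y x = x := by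
  unfold meet
  rw [← A.comm, h, A.sub_zero]

lemma le_antisymm' {x y : α} (h1 : A.le x y) (h2 : A.le y x) : x = y := by
  have := A.meet_eq_of_le h1   -- meet y x = x
  rw [A.meet_comm'] at this    -- meet x y = x
  rw [← this, A.meet_eq_of_le h2]

lemma sub_le' (x y : α) : A.le (A.sub x y) x := by
  unfold le
  rw [A.exch, A.sub_self', A.zero_sub]

lemma le_trans' {x y z : α} (h1 : A.le x y) (h2 : A.le y z) : A.le x z := by
  have hx : x = A.sub y (A.sub y x) := (A.meet_eq_of_le h1).symm
  unfold le
  rw [hx, A.exch, h2, A.zero_sub]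

lemma meet_le_left (x y : α) : A.le (A.meet x y) x := A.sub_le' x (A.sub x y)

lemma meet_le_right (x y : α) : A.le (A.meet x y) y := by
  rw [A.meet_comm']; exact A.sub_le' y (A.sub y x)

lemma anti_right {z y : α} (h : A.le z y) (x : α) : A.le (A.sub x y) (A.sub x z) := by
  unfold le
  rw [A.exch]
  exact A.le_trans' (A.meet_le_right x z) h

lemma mono_left {x y : α} (h : A.le x y) (z : α) : A.le (A.sub x z) (A.sub y z) := by
  have hx : x = A.sub y (A.sub y x) := (A.meet_eq_of_le h).symm
  rw [hx, A.exch]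
  exact A.sub_le' _ _

lemma sub_sub_sub (x y : α) : A.sub x (A.sub x (A.sub x y)) = A.sub x y := by
  exact A.meet_eq_of_le (A.sub_le' x y)

lemma sub_meet (x y : α) : A.sub x (A.meet x y) = A.sub x y := A.sub_sub_sub x y

lemma le_meet {z x y : α} (h1 : A.le z x) (h2 : A.le z y) : A.le z (A.meet x y) := by
  have hz : z = A.sub x (A.sub x z) := (A.meet_eq_of_le h1).symm
  unfold le meet
  rw [hz, A.exch, A.sub_sub_sub]
  exact A.anti_right h2 x

end CBCK

namespace CBCK

variable {α : Type*} [Fintype α] (A : CBCK α)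

lemma ncard_downset (a : α) : ({x | A.le x a} : Set α).ncard = A.height a + 1 := by
  have hpos : 0 < ({x | A.le x a} : Set α).ncard := by
    rw [Set.ncard_pos (Set.toFinite _)]
    exact ⟨a, A.le_refl' a⟩
  unfold height
  omega

lemma height_mono {x y : α} (h : A.le x y) : A.height x ≤ A.height y := by
  have hsub : ({z | A.le z x} : Set α) ⊆ {z | A.le z y} := fun z hz => A.le_trans' hz h
  have := Set.ncard_le_ncard hsub (Set.toFinite _)
  rw [A.ncard_downset, A.ncard_downset] at this
  omega

lemma height_strict {x y : α} (h : A.le x y) (hne : x ≠ y) : A.height x < A.height y := by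
  have hsub : ({z | A.le z x} : Set α) ⊂ {z | A.le z y} := by
    constructor
    · exact fun z hz => A.le_trans' hz h
    · intro hsup
      exact hne (A.le_antisymm' h (hsup (A.le_refl' y)))
  have := Set.ncard_lt_ncard hsub (Set.toFinite _)
  rw [A.ncard_downset, A.ncard_downset] at this
  omega

omit [Fintype α] in
lemma height_zero' : A.height A.zero = 0 := by
  have : ({x | A.le x A.zero} : Set α) = {A.zero} := by
    ext z; simp [A.le_zero_iff']
  unfold height
  rw [this, Set.ncard_singleton]

lemma eq_zero_of_height {a : α} (h : A.height a = 0) : a = A.zero := by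
  have h1 : ({x | A.le x a} : Set α).ncard = 1 := by
    rw [A.ncard_downset, h]
  obtain ⟨b, hb⟩ := Set.ncard_eq_one.mp h1
  have ha : a ∈ ({x | A.le x a} : Set α) := A.le_refl' a
  have h0 : A.zero ∈ ({x | A.le x a} : Set α) := A.zero_le' a
  rw [hb] at ha h0
  rw [Set.mem_singleton_iff] at ha h0
  rw [ha, ← h0]

lemma atom_le {e : α} (he : A.atom e) (huniq : ∀ x, A.atom x → x = e) :
    ∀ a, a ≠ A.zero → A.le e a := by
  have H : ∀ N a, A.height a ≤ N → a ≠ A.zero → A.le e a := by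
    intro N
    induction N with
    | zero =>
      intro a ha h0
      exact absurd (A.eq_zero_of_height (Nat.le_zero.mp ha)) h0
    | succ N ih =>
      intro a ha h0
      by_cases hat : ∀ x, A.lt x a → x = A.zero
      · have : a = e := huniq a ⟨h0, hat⟩
        rw [this]; exact A.le_refl' e
      · push_neg at hat
        obtain ⟨x, hlt, hx0⟩ := hat
        have hs : A.height x < A.height a := A.height_strict hlt.1 hlt.2
        exact A.le_trans' (ih x (by omega) hx0) hlt.1
  intro a
  exact H (A.height a) a le_rfl

lemma height_sub (hchain : A.chainIntervals)
    {e : α} (he : A.atom e) (huniq : ∀ x, A.atom x → x = e)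
    {x y : α} (hyx : A.le y x) :
    A.height (A.sub x y) = A.height x - A.height y := by
  classical
  set D : Set α := {z | A.le z (A.sub x y)} with hD
  set I : Set α := {w | A.le y w ∧ A.le w x} with hI
  have himg : (fun w => A.sub w y) '' I = D := by
    ext z
    constructor
    · rintro ⟨w, ⟨hyw, hwx⟩, rfl⟩
      exact A.mono_left hwx y
    · intro hz
      have hz' : A.le z (A.sub x y) := hz
      refine ⟨A.sub x (A.sub (A.sub x y) z), ⟨?_, A.sub_le' _ _⟩, ?_⟩
      · have h1 : A.le (A.sub x (A.sub x y)) (A.sub x (A.sub (A.sub x y) z)) :=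
          A.anti_right (A.sub_le' (A.sub x y) z) x
        have h2 : A.sub x (A.sub x y) = y := A.meet_eq_of_le hyx
        rw [h2] at h1
        exact h1
      · show A.sub (A.sub x (A.sub (A.sub x y) z)) y = z
        rw [A.exch]
        exact A.meet_eq_of_le hz'
  have key : ∀ w1 w2, w1 ∈ I → w2 ∈ I → A.le w1 w2 →
      A.sub w1 y = A.sub w2 y → A.le w2 w1 := by
    intro w1 w2 h1 h2 h12 heq
    set d := A.sub w1 y with hd
    set s := A.sub w2 w1 with hs
    have hw1 : A.sub w2 s = w1 := A.meet_eq_of_le h12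
    have hds : A.sub d s = d := by
      calc A.sub d s = A.sub (A.sub w2 y) s := by rw [← heq]
        _ = A.sub (A.sub w2 s) y := by rw [A.exch]
        _ = A.sub w1 y := by rw [hw1]
    have hmeet0 : A.meet d s = A.zero := by
      unfold meet
      rw [hds, A.sub_self']
    by_cases hd0 : d = A.zero
    · -- w1 ≤ y so w1 = y, and w2 ≤ y too
      have hw1y : w1 = y := A.le_antisymm' hd0 h1.1
      show A.sub w2 w1 = A.zero
      rw [hw1y, ← heq]
      exact hd0
    · by_cases hs0 : s = A.zero
      · exact hs0
      · exfalso
        have hed : A.le e d := A.atom_le he huniq d hd0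
        have hes : A.le e s := A.atom_le he huniq s hs0
        have := A.le_meet hed hes
        rw [hmeet0] at this
        exact he.1 (A.le_zero_iff'.mp this)
  have hinj : Set.InjOn (fun w => A.sub w y) I := by
    intro w1 h1 w2 h2 heq
    rcases hchain x w1 w2 h1.2 h2.2 with h | h
    · exact A.le_antisymm' h (key w1 w2 h1 h2 h heq)
    · exact (A.le_antisymm' h (key w2 w1 h2 h1 h heq.symm)).symm
  have hDI : D.ncard = I.ncard := by
    rw [← himg, Set.ncard_image_of_injOn hinj]
  have hunion : {z | A.le z y} ∪ I = {z | A.le z x} := by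
    ext z
    simp only [Set.mem_union, Set.mem_setOf_eq, hI]
    constructor
    · rintro (h | ⟨_, h⟩)
      · exact A.le_trans' h hyx
      · exact h
    · intro hz
      rcases hchain x z y hz hyx with h | h
      · exact Or.inl h
      · exact Or.inr ⟨h, hz⟩
  have hinter : {z | A.le z y} ∩ I = {y} := by
    ext z
    simp only [Set.mem_inter_iff, Set.mem_setOf_eq, hI, Set.mem_singleton_iff]
    constructor
    · rintro ⟨h1, h2, _⟩
      exact A.le_antisymm' h1 h2
    · intro h
      rw [h]
      exact ⟨A.le_refl' y, A.le_refl' y, hyx⟩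
  have hkey := Set.ncard_union_add_ncard_inter {z | A.le z y} I (Set.toFinite _) (Set.toFinite _)
  rw [hunion, hinter, Set.ncard_singleton] at hkey
  have e1 : D.ncard = A.height (A.sub x y) + 1 := A.ncard_downset _
  have e2 : ({z | A.le z y} : Set α).ncard = A.height y + 1 := A.ncard_downset _
  have e3 : ({z | A.le z x} : Set α).ncard = A.height x + 1 := A.ncard_downset _
  have hle : A.height y ≤ A.height x := A.height_mono hyx
  omega

lemma exists_height (hchain : A.chainIntervals) {m : α} {j : ℕ} (hj : j ≤ A.height m) :
    ∃ u, A.le u m ∧ A.height u = j := by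
  classical
  have hinj : Set.InjOn A.height {z | A.le z m} := by
    intro u1 h1 u2 h2 heq
    by_contra hne
    rcases hchain m u1 u2 h1 h2 with h | h
    · exact absurd heq (Nat.ne_of_lt (A.height_strict h hne))
    · exact absurd heq.symm (Nat.ne_of_lt (A.height_strict h (Ne.symm hne)))
  have hsubset : A.height '' {z | A.le z m} ⊆ ↑(Finset.range (A.height m + 1)) := by
    rintro i ⟨u, hu, rfl⟩
    simp only [Finset.coe_range, Set.mem_Iio]
    have := A.height_mono hu
    omega
  have hcard : (↑(Finset.range (A.height m + 1)) : Set ℕ).ncard ≤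
      (A.height '' {z | A.le z m}).ncard := by
    rw [Set.ncard_coe_finset, Finset.card_range, Set.ncard_image_of_injOn hinj,
      A.ncard_downset]
  have heq := Set.eq_of_subset_of_ncard_le hsubset hcard (Set.toFinite _)
  have hjmem : j ∈ (↑(Finset.range (A.height m + 1)) : Set ℕ) := by
    simp only [Finset.coe_range, Set.mem_Iio]; omega
  rw [← heq] at hjmem
  obtain ⟨u, hu, hju⟩ := hjmem
  exact ⟨u, hu, hju⟩

lemma maximal_of_top {c : α} (h : ∀ z, A.height z ≤ A.height c) : A.maximal c := by
  intro z hz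
  by_contra hne
  exact absurd (h z) (not_le.mpr (A.height_strict hz (fun h' => hne h'.symm)))

lemma exists_maximal_ge {n : ℕ} (hub : ∀ a, A.height a ≤ n) (c : α) :
    ∃ m, A.le c m ∧ A.maximal m := by
  have H : ∀ N c, n - A.height c ≤ N → ∃ m, A.le c m ∧ A.maximal m := by
    intro N
    induction N with
    | zero =>
      intro c hc
      have hcn : A.height c = n := le_antisymm (hub c) (by omega)
      refine ⟨c, A.le_refl' c, A.maximal_of_top (fun z => ?_)⟩
      rw [hcn]; exact hub z
    | succ N ih =>
      intro c hc
      by_cases hm : A.maximal c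
      · exact ⟨c, A.le_refl' c, hm⟩
      · simp only [maximal] at hm
        push_neg at hm
        obtain ⟨z, hcz, hne⟩ := hm
        have h1 : A.height c < A.height z := A.height_strict hcz (Ne.symm hne)
        have h2 := hub z
        obtain ⟨m, h3, h4⟩ := ih z (by omega)
        exact ⟨m, A.le_trans' hcz h3, h4⟩
  exact H n c (by omega)

end CBCK


/-- For a finite single-atom rooted-tree cBCK-algebra of height `n` and a
divisor `k` of `n` with `1 < k < n`, the set `A_k ∪ m(A)` is a subalgebra
universe iff `b(A) ⊆ A_k` and `m(A) ⊆ A_k`. -/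
theorem stmt8 {α : Type*} [Fintype α] (A : CBCK α)
    (hchain : A.chainIntervals)
    (e : α) (he : A.atom e) (huniq : ∀ x, A.atom x → x = e)
    (n k : ℕ)
    (hub : ∀ a, A.height a ≤ n) (hex : ∃ a, A.height a = n)
    (hk : k ∣ n) (hk1 : 1 < k) (hkn : k < n) :
    A.IsSub ({a | k ∣ A.height a} ∪ {m | A.maximal m}) ↔
      ({b | A.branching b} ⊆ {a | k ∣ A.height a} ∧
       {m | A.maximal m} ⊆ {a | k ∣ A.height a}) := by
  classical
  set B : Set α := {a | k ∣ A.height a} ∪ {m | A.maximal m} with hBdef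
  constructor
  · intro hB
    obtain ⟨x0, hx0⟩ := hex
    have hx0max : A.maximal x0 := A.maximal_of_top (fun z => by rw [hx0]; exact hub z)
    have hx0B : x0 ∈ B := Or.inr hx0max
    have hmne : ∀ m, A.maximal m → m ≠ A.zero := by
      intro m hm h0
      have h1 : A.le m e := by rw [h0]; exact A.zero_le' e
      have h2 := hm e h1
      rw [h0] at h2
      exact he.1 h2
    have hmax_div : ∀ m, A.maximal m → k ∣ A.height m := by
      intro m hm
      by_cases hcase : k ≤ A.height m
      · obtain ⟨u, hum, huh⟩ := A.exists_height hchain hcase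
        have huB : u ∈ B := Or.inl (by simp only [Set.mem_setOf_eq, huh]; exact dvd_rfl)
        have ht : A.sub m u ∈ B := hB.2 m (Or.inr hm) u huB
        have hh : A.height (A.sub m u) = A.height m - k := by
          rw [A.height_sub hchain he huniq hum, huh]
        rcases ht with h | h
        · have h2 : k ∣ A.height m - k := by rw [← hh]; exact h
          have h3 : k ∣ A.height m - k + k := Nat.dvd_add h2 dvd_rfl
          rwa [Nat.sub_add_cancel hcase] at h3
        · exfalso
          have heq := h m (A.sub_le' m u)
          have := congrArg A.height heq
          omega
      · push_neg at hcase
        exfalso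
        have hm0 : m ≠ A.zero := hmne m hm
        have hx00 : x0 ≠ A.zero := by
          intro h
          rw [h, A.height_zero'] at hx0
          omega
        set w := A.meet x0 m with hwdef
        have hew : A.le e w :=
          A.le_meet (A.atom_le he huniq x0 hx00) (A.atom_le he huniq m hm0)
        have hw0 : w ≠ A.zero := by
          intro h
          rw [h] at hew
          exact he.1 (A.le_zero_iff'.mp hew)
        have hwx : A.le w x0 := A.meet_le_left x0 m
        have hwm : A.le w m := A.meet_le_right x0 m
        have ht : A.sub x0 m ∈ B := hB.2 x0 hx0B m (Or.inr hm)
        have heqsub : A.sub x0 m = A.sub x0 w := (A.sub_meet x0 m).symm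
        have hh : A.height (A.sub x0 m) = n - A.height w := by
          rw [heqsub, A.height_sub hchain he huniq hwx, hx0]
        have hw_pos : 0 < A.height w := by
          rcases Nat.eq_zero_or_pos (A.height w) with h | h
          · exact absurd (A.eq_zero_of_height h) hw0
          · exact h
        have hw_lt : A.height w < k := lt_of_le_of_lt (A.height_mono hwm) hcase
        have hwn : A.height w ≤ n := hub w
        rcases ht with h | h
        · have h2 : k ∣ n - A.height w := by rw [← hh]; exact h
          have h3 : k ∣ A.height w := by
            have := Nat.dvd_sub hk h2
            rwa [Nat.sub_sub_self hwn] at this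
          have := Nat.le_of_dvd hw_pos h3
          omega
        · have heq := h x0 (A.sub_le' x0 m)
          have := congrArg A.height heq
          rw [hx0, hh] at this
          omega
    refine ⟨?_, fun m hm => hmax_div m hm⟩
    intro b hb
    simp only [Set.mem_setOf_eq] at hb ⊢
    obtain ⟨c, d, ⟨hbc, hbcne⟩, ⟨hbd, hbdne⟩, hmeet⟩ := hb
    by_contra hndvd
    have hb0 : b ≠ A.zero := by
      intro h
      rw [h, A.height_zero'] at hndvd
      exact hndvd (dvd_zero k)
    obtain ⟨c', hcc', hc'max⟩ := A.exists_maximal_ge hub c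
    obtain ⟨d', hdd', hd'max⟩ := A.exists_maximal_ge hub d
    have hcd : ¬(A.le c d ∨ A.le d c) := by
      rintro (h | h)
      · apply hbcne
        rw [← hmeet]
        unfold CBCK.meet
        rw [h, A.sub_zero]
      · apply hbdne
        rw [← hmeet, A.meet_comm']
        unfold CBCK.meet
        rw [h, A.sub_zero]
    have hwc : A.le (A.meet c' d') c := by
      rcases hchain c' (A.meet c' d') c (A.meet_le_left c' d') hcc' with h | h
      · exact h
      · exfalso
        apply hcd
        have h1 : A.le c d' := A.le_trans' h (A.meet_le_right c' d')
        exact hchain d' c d h1 hdd'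
    have hwd : A.le (A.meet c' d') d := by
      rcases hchain d' (A.meet c' d') d (A.meet_le_right c' d') hdd' with h | h
      · exact h
      · exfalso
        apply hcd
        have h1 : A.le d c' := A.le_trans' h (A.meet_le_left c' d')
        rcases hchain c' c d hcc' h1 with h2 | h2
        · exact Or.inl h2
        · exact Or.inr h2
    have hbw : A.le b (A.meet c' d') :=
      A.le_meet (A.le_trans' hbc hcc') (A.le_trans' hbd hdd')
    have hwb : A.le (A.meet c' d') b := by
      rw [← hmeet]
      exact A.le_meet hwc hwd
    have hw : A.meet c' d' = b := A.le_antisymm' hwb hbw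
    have ht : A.sub c' d' ∈ B := hB.2 c' (Or.inr hc'max) d' (Or.inr hd'max)
    have heq2 : A.sub c' d' = A.sub c' b := by
      rw [← hw, A.sub_meet]
    have hbc2 : A.le b c' := A.le_trans' hbc hcc'
    have hh : A.height (A.sub c' d') = A.height c' - A.height b := by
      rw [heq2, A.height_sub hchain he huniq hbc2]
    have hbpos : 0 < A.height b := by
      rcases Nat.eq_zero_or_pos (A.height b) with h | h
      · exact absurd (A.eq_zero_of_height h) hb0
      · exact h
    have hble : A.height b ≤ A.height c' := A.height_mono hbc2
    rcases ht with h | h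
    · apply hndvd
      have h2 : k ∣ A.height c' - A.height b := by rw [← hh]; exact h
      have := Nat.dvd_sub (hmax_div c' hc'max) h2
      rwa [Nat.sub_sub_self hble] at this
    · have heq3 := h c' (A.sub_le' c' d')
      have := congrArg A.height heq3
      omega
  · rintro ⟨hbr, hmx⟩
    constructor
    · exact Or.inl (by simp only [Set.mem_setOf_eq, A.height_zero']; exact dvd_zero k)
    · intro x hx y hy
      have hxk : k ∣ A.height x := by
        rcases hx with h | h
        · exact h
        · exact hmx h
      have hyk : k ∣ A.height y := by
        rcases hy with h | h
        · exact h
        · exact hmx h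
      left
      show k ∣ A.height (A.sub x y)
      by_cases h1 : A.le x y
      · rw [show A.sub x y = A.zero from h1, A.height_zero']
        exact dvd_zero k
      · by_cases h2 : A.le y x
        · rw [A.height_sub hchain he huniq h2]
          exact Nat.dvd_sub hxk hyk
        · have hbranch : A.branching (A.meet x y) := by
            refine ⟨x, y, ⟨A.meet_le_left x y, ?_⟩, ⟨A.meet_le_right x y, ?_⟩, rfl⟩
            · intro h
              apply h1
              rw [← h]
              exact A.meet_le_right x y
            · intro h
              apply h2
              rw [← h]
              exact A.meet_le_left x y
          have hwk : k ∣ A.height (A.meet x y) := hbr hbranch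
          rw [← A.sub_meet, A.height_sub hchain he huniq (A.meet_le_left x y)]
          exact Nat.dvd_sub hxk hwk
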